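/- arXiv:1910.01885 — 4 statements merged into one kernel-verified Lean document; each statement's English description precedes it below -/
import Mathlib

section
/- Let α, μ, ĥ, ξ, A₀ > 0 and let f_{h_f}(u) = (α·μ^μ/(ĥ^{αμ}·Γ(μ)))·u^{αμ−1}·exp(−μ·u^α/ĥ^α) for u > 0 and f_{h_p}(y) = (ξ/A₀^ξ)·y^{ξ−1} for 0 < y ≤ A₀. Then for every x > 0, the density of the product of independent variables with these densities satisfies ∫₀^{A₀} (1/y)·f_{h_f}(x/y)·f_{h_p}(y) dy = (ξ·μ^{ξ/α}/(A₀^ξ·ĥ^ξ·Γ(μ)))·x^{ξ−1}·Γ((αμ−ξ)/α, μ·x^α/(ĥ^α·A₀^α)), where Γ(s,T) = ∫_T^∞ t^{s−1}·e^{−t} dt is the upper incomplete gamma function and Γ(μ) is the Gamma function. -/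
/-!
Substituting `t = μ (x/y)^α / ĥ^α = k y^{-α}` with `k = μ x^α / ĥ^α` maps `y ∈ (0, A₀]` onto
`t ∈ [k A₀^{-α}, ∞)` with `|dt/dy| = α k y^{-α-1}`. After the substitution the integrand is a
constant multiple of `t^{(αμ-ξ)/α - 1} e^{-t}`, so the integral becomes an upper incomplete gamma
function.
-/

open Real MeasureTheory Set

theorem image_mul_rpow_neg_Ioc {α c A : ℝ} (hα : 0 < α) (hc : 0 < c) (hA : 0 < A) :
    (fun y => c * y ^ (-α)) '' Ioc 0 A = Ici (c * A ^ (-α)) := by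
  ext t
  constructor
  · rintro ⟨y, ⟨hy, hyA⟩, rfl⟩
    exact mul_le_mul_of_nonneg_left (rpow_le_rpow_of_nonpos hy hyA (by linarith)) hc.le
  · intro ht
    have hAt : A ^ (-α) ≤ t / c := (le_div_iff₀' hc).2 ht
    have htc : 0 < t / c := (rpow_pos_of_pos hA _).trans_le hAt
    refine ⟨(t / c) ^ (-α⁻¹), ⟨by positivity, ?_⟩, ?_⟩
    · calc (t / c) ^ (-α⁻¹) ≤ (A ^ (-α)) ^ (-α⁻¹) :=
            rpow_le_rpow_of_nonpos (by positivity) hAt (by simp [hα.le])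
        _ = A := by rw [← rpow_mul hA.le, neg_mul_neg, mul_inv_cancel₀ hα.ne', rpow_one]
    · simp only
      rw [← rpow_mul htc.le, neg_mul_neg, inv_mul_cancel₀ hα.ne', rpow_one, mul_div_cancel₀ _ hc.ne']

theorem integral_comp_mul_rpow_neg_Ioc {E : Type*} [NormedAddCommGroup E] [NormedSpace ℝ E]
    {α c A : ℝ} (hα : 0 < α) (hc : 0 < c) (hA : 0 < A) (g : ℝ → E) :
    ∫ y in Ioc 0 A, (α * c * y ^ (-α - 1)) • g (c * y ^ (-α)) =
      ∫ t in Ioi (c * A ^ (-α)), g t := by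
  have hderiv : ∀ y ∈ Ioc (0 : ℝ) A,
      HasDerivWithinAt (fun y => c * y ^ (-α)) (c * (-α * y ^ (-α - 1))) (Ioc 0 A) y :=
    fun y hy => ((hasDerivAt_rpow_const (Or.inl hy.1.ne')).const_mul c).hasDerivWithinAt
  have hinj : InjOn (fun y : ℝ => c * y ^ (-α)) (Ioc 0 A) := fun y hy z hz h =>
    (strictAntiOn_rpow_Ioi_of_exponent_neg (neg_lt_zero.2 hα)).injOn hy.1 hz.1
      (mul_left_cancel₀ hc.ne' h)
  rw [← integral_Ici_eq_integral_Ioi, ← image_mul_rpow_neg_Ioc hα hc hA,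
    integral_image_eq_integral_abs_deriv_smul measurableSet_Ioc hderiv hinj]
  refine setIntegral_congr_fun measurableSet_Ioc fun y hy => ?_
  rw [abs_mul, abs_mul, abs_neg, abs_of_pos hc, abs_of_pos hα,
    abs_of_pos (rpow_pos_of_pos hy.1 _), mul_left_comm, mul_assoc]

theorem product_density_integrand_eq {α μ hhat ξ A₀ x y : ℝ} (hα : 0 < α) (hμ : 0 < μ)
    (hhat_pos : 0 < hhat) (hξ : 0 < ξ) (hA₀ : 0 < A₀) (hx : 0 < x) (hy : 0 < y) :
    (1 / y) *
        ((α * μ ^ μ / (hhat ^ (α * μ) * Real.Gamma μ)) * (x / y) ^ (α * μ - 1) *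
          Real.exp (-μ * (x / y) ^ α / hhat ^ α)) *
        ((ξ / A₀ ^ ξ) * y ^ (ξ - 1))
      = (ξ * μ ^ (ξ / α) / (A₀ ^ ξ * hhat ^ ξ * Real.Gamma μ)) * x ^ (ξ - 1) *
        ((α * (μ * x ^ α / hhat ^ α) * y ^ (-α - 1)) *
          ((μ * x ^ α / hhat ^ α * y ^ (-α)) ^ ((α * μ - ξ) / α - 1) *
            Real.exp (-(μ * x ^ α / hhat ^ α * y ^ (-α))))) := by
  have hexp : -μ * (x / y) ^ α / hhat ^ α = -(μ * x ^ α / hhat ^ α * y ^ (-α)) := by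
    rw [div_rpow hx.le hy.le, rpow_neg hy.le]
    ring
  rw [hexp]
  -- Both sides are positive, and their logarithms are linear in `log x`, `log y`, `log μ`, `log ĥ`.
  apply log_injOn_pos (by simp only [mem_Ioi]; positivity) (by simp only [mem_Ioi]; positivity)
  simp (disch := positivity) only [log_mul, log_div, log_rpow, log_exp, log_one]
  field_simp
  ring

/-- The density of the product of an independent α–μ fading coefficient and a
misalignment fading coefficient: for every `x > 0`,
`∫₀^{A₀} (1/y) f_{h_f}(x/y) f_{h_p}(y) dy
  = (ξ μ^{ξ/α}/(A₀^ξ hhat^ξ Γ(μ))) x^{ξ-1} Γ((αμ-ξ)/α, μ x^α/(hhat^α A₀^α))`. -/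
theorem product_density_eq
    (α μ hhat ξ A₀ : ℝ) (hα : 0 < α) (hμ : 0 < μ) (hhat_pos : 0 < hhat)
    (hξ : 0 < ξ) (hA₀ : 0 < A₀) (x : ℝ) (hx : 0 < x) :
    (∫ y in Set.Ioc (0 : ℝ) A₀,
        (1 / y) *
          ((α * μ ^ μ / (hhat ^ (α * μ) * Real.Gamma μ)) * (x / y) ^ (α * μ - 1) *
            Real.exp (-μ * (x / y) ^ α / hhat ^ α)) *
          ((ξ / A₀ ^ ξ) * y ^ (ξ - 1)))
      = (ξ * μ ^ (ξ / α) / (A₀ ^ ξ * hhat ^ ξ * Real.Gamma μ)) * x ^ (ξ - 1) *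
          ∫ t in Set.Ioi (μ * x ^ α / (hhat ^ α * A₀ ^ α)),
            t ^ ((α * μ - ξ) / α - 1) * Real.exp (-t) := by
  have hk : 0 < μ * x ^ α / hhat ^ α := by positivity
  have hlower : μ * x ^ α / (hhat ^ α * A₀ ^ α) = μ * x ^ α / hhat ^ α * A₀ ^ (-α) := by
    rw [rpow_neg hA₀.le]
    ring
  rw [hlower, ← integral_comp_mul_rpow_neg_Ioc hα hk hA₀, ← integral_const_mul]
  refine setIntegral_congr_fun measurableSet_Ioc fun y hy => ?_
  rw [smul_eq_mul]
  exact product_density_integrand_eq hα hμ hhat_pos hξ hA₀ hx hy.1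
end

section
/- Let α, μ, ĥ, ξ, A₀ > 0 and set Θ = ξ·μ^{ξ/α}/(A₀^ξ·ĥ^ξ·Γ(μ)), Φ = (αμ − ξ)/α, and X = μ/(ĥ^α·A₀^α). Then the combined fading density f_{h_{fp}}(x) = Θ·x^{ξ−1}·Γ(Φ, X·x^α) integrates to one over (0, ∞): ∫₀^∞ Θ·x^{ξ−1}·Γ(Φ, X·x^α) dx = 1, where Γ(s,T) = ∫_T^∞ t^{s−1}·e^{−t} dt is the upper incomplete gamma function. -/
open Real MeasureTheory

/-- The combined multipath-and-misalignment fading density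
`f_{h_{fp}}(x) = Θ x^{ξ-1} Γ(Φ, X x^α)` integrates to one over `(0,∞)`. -/
theorem combined_fading_density_integrates_to_one
    (α μ hhat ξ A₀ : ℝ) (hα : 0 < α) (hμ : 0 < μ) (hhat_pos : 0 < hhat)
    (hξ : 0 < ξ) (hA₀ : 0 < A₀)
    (Θ Φ X : ℝ)
    (hΘ : Θ = ξ * μ ^ (ξ / α) / (A₀ ^ ξ * hhat ^ ξ * Real.Gamma μ))
    (hΦ : Φ = (α * μ - ξ) / α)
    (hX : X = μ / (hhat ^ α * A₀ ^ α)) :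
    (∫ x in Set.Ioi (0 : ℝ),
        Θ * x ^ (ξ - 1) *
          ∫ t in Set.Ioi (X * x ^ α), t ^ (Φ - 1) * Real.exp (-t)) = 1 := by
  have hΓμ : 0 < Real.Gamma μ := Real.Gamma_pos_of_pos hμ
  have hXpos : 0 < X := by rw [hX]; positivity
  have hΘpos : 0 < Θ := by rw [hΘ]; positivity
  set s : ℝ := ξ / α with hs
  have hspos : 0 < s := div_pos hξ hα
  have hΦs : Φ + s = μ := by rw [hΦ, hs]; field_simp; ring
  -- the kernel on the product space
  set G : ℝ × ℝ → ℝ := fun p =>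
    if X * p.1 ^ α < p.2 then Θ * p.1 ^ (ξ - 1) * (p.2 ^ (Φ - 1) * Real.exp (-p.2)) else 0
    with hGdef
  have hGmeas : Measurable G := by
    apply Measurable.ite
    · exact measurableSet_lt ((measurable_fst.pow_const _).const_mul X) measurable_snd
    · fun_prop
    · exact measurable_const
  -- Step 1: for each x > 0, the inner integral rewrites via the kernel
  have hinner : ∀ x ∈ Set.Ioi (0 : ℝ),
      Θ * x ^ (ξ - 1) * ∫ t in Set.Ioi (X * x ^ α), t ^ (Φ - 1) * Real.exp (-t)
        = ∫ t in Set.Ioi (0 : ℝ), G (x, t) := by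
    intro x hx
    have hc : 0 < X * x ^ α := mul_pos hXpos (rpow_pos_of_pos hx _)
    have hfun : (fun t => G (x, t))
        = (Set.Ioi (X * x ^ α)).indicator
            (fun t => Θ * x ^ (ξ - 1) * (t ^ (Φ - 1) * Real.exp (-t))) := by
      funext t
      simp [hGdef, Set.indicator_apply, Set.mem_Ioi]
    rw [hfun, integral_indicator measurableSet_Ioi,
      Measure.restrict_restrict measurableSet_Ioi, Set.Ioi_inter_Ioi,
      sup_eq_left.mpr hc.le, integral_const_mul]
  -- Closed form of the x-sections
  have hRpos : ∀ t ∈ Set.Ioi (0 : ℝ), 0 < (t / X) ^ α⁻¹ := fun t ht =>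
    rpow_pos_of_pos (div_pos ht hXpos) _
  have hiff : ∀ t ∈ Set.Ioi (0 : ℝ), ∀ x ∈ Set.Ioi (0 : ℝ),
      (X * x ^ α < t ↔ x < (t / X) ^ α⁻¹) := by
    intro t ht x hx
    rw [Real.lt_rpow_inv_iff_of_pos hx.le (le_of_lt (div_pos ht hXpos)) hα,
      lt_div_iff₀ hXpos, mul_comm]
  -- a.e. identification of the x-sections with an indicator function
  have hsec_eq : ∀ t ∈ Set.Ioi (0 : ℝ),
      (fun x => G (x, t)) =ᵐ[volume.restrict (Set.Ioi 0)]
        (Set.Iio ((t / X) ^ α⁻¹)).indicator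
          (fun x => Θ * x ^ (ξ - 1) * (t ^ (Φ - 1) * Real.exp (-t))) := by
    intro t ht
    filter_upwards [ae_restrict_mem measurableSet_Ioi] with x hx
    rw [Set.indicator_apply]
    simp only [hGdef, Set.mem_Iio]
    exact if_congr (hiff t ht x hx) rfl rfl
  -- integrability of the indicator sections
  have hsec_int : ∀ t ∈ Set.Ioi (0 : ℝ),
      Integrable ((Set.Iio ((t / X) ^ α⁻¹)).indicator
          (fun x => Θ * x ^ (ξ - 1) * (t ^ (Φ - 1) * Real.exp (-t))))
        (volume.restrict (Set.Ioi 0)) := by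
    intro t ht
    rw [integrable_indicator_iff measurableSet_Iio]
    unfold IntegrableOn
    rw [Measure.restrict_restrict measurableSet_Iio, Set.Iio_inter_Ioi]
    have hbase : IntegrableOn (fun x : ℝ => x ^ (ξ - 1)) (Set.Ioo 0 ((t / X) ^ α⁻¹)) := by
      have h1 := intervalIntegral.intervalIntegrable_rpow'
        (show (-1 : ℝ) < ξ - 1 by linarith) (a := 0) (b := (t / X) ^ α⁻¹)
      rwa [intervalIntegrable_iff_integrableOn_Ioo_of_le (hRpos t ht).le] at h1
    exact (hbase.const_mul Θ).mul_const _
  -- value of the x-sections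
  have hval : ∀ t ∈ Set.Ioi (0 : ℝ),
      (∫ x in Set.Ioi (0 : ℝ), G (x, t))
        = Θ * X ^ (-s) / ξ * (t ^ (μ - 1) * Real.exp (-t)) := by
    intro t ht
    have ht' : (0 : ℝ) < t := ht
    set R : ℝ := (t / X) ^ α⁻¹ with hR
    have hRp : 0 < R := hRpos t ht
    rw [integral_congr_ae (hsec_eq t ht), integral_indicator measurableSet_Iio,
      Measure.restrict_restrict measurableSet_Iio, Set.Iio_inter_Ioi]
    have hIoo : (∫ x in Set.Ioo (0 : ℝ) R, Θ * x ^ (ξ - 1) * (t ^ (Φ - 1) * Real.exp (-t)))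
        = Θ * (t ^ (Φ - 1) * Real.exp (-t)) * (R ^ ξ / ξ) := by
      have hrw : (fun x : ℝ => Θ * x ^ (ξ - 1) * (t ^ (Φ - 1) * Real.exp (-t)))
          = fun x => (Θ * (t ^ (Φ - 1) * Real.exp (-t))) * x ^ (ξ - 1) :=
        funext fun x => by ring
      rw [hrw, integral_const_mul]
      congr 1
      rw [← MeasureTheory.integral_Ioc_eq_integral_Ioo,
        ← intervalIntegral.integral_of_le hRp.le,
        integral_rpow (Or.inl (by linarith : (-1 : ℝ) < ξ - 1))]
      rw [show ξ - 1 + 1 = ξ by ring, Real.zero_rpow hξ.ne']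
      ring
    rw [hIoo]
    have hRξ : R ^ ξ = t ^ s * X ^ (-s) := by
      rw [hR, ← Real.rpow_mul (le_of_lt (div_pos ht' hXpos)),
        show α⁻¹ * ξ = s by rw [hs]; field_simp,
        Real.div_rpow ht'.le hXpos.le, Real.rpow_neg hXpos.le, div_eq_mul_inv]
    rw [hRξ]
    have ht2 : t ^ (Φ - 1) * t ^ s = t ^ (μ - 1) := by
      rw [← Real.rpow_add ht']; congr 1; linarith
    rw [← ht2]; ring
  -- integrability of the kernel on the product space
  have hclosed : Integrable
      (fun t => Θ * X ^ (-s) / ξ * (t ^ (μ - 1) * Real.exp (-t)))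
      (volume.restrict (Set.Ioi 0)) := by
    have hbase : IntegrableOn (fun t : ℝ => t ^ (μ - 1) * Real.exp (-t)) (Set.Ioi 0) :=
      (Real.GammaIntegral_convergent hμ).congr_fun (fun x hx => mul_comm _ _)
        measurableSet_Ioi
    exact hbase.const_mul _
  have hnorm : ∀ t ∈ Set.Ioi (0 : ℝ),
      (∫ x in Set.Ioi (0 : ℝ), ‖G (x, t)‖) = ∫ x in Set.Ioi (0 : ℝ), G (x, t) := by
    intro t ht
    refine setIntegral_congr_fun measurableSet_Ioi (fun x hx => ?_)
    have : 0 ≤ G (x, t) := by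
      simp only [hGdef]
      split
      · have hxp : (0 : ℝ) < x := hx
        have htp : (0 : ℝ) < t := ht
        positivity
      · exact le_rfl
    exact Real.norm_of_nonneg this
  have hInt : Integrable G
      ((volume.restrict (Set.Ioi 0)).prod (volume.restrict (Set.Ioi 0))) := by
    rw [integrable_prod_iff' hGmeas.aestronglyMeasurable]
    constructor
    · filter_upwards [ae_restrict_mem measurableSet_Ioi] with t ht
      exact (hsec_int t ht).congr (hsec_eq t ht).symm
    · refine hclosed.congr ?_
      filter_upwards [ae_restrict_mem measurableSet_Ioi] with t ht
      rw [hnorm t ht, hval t ht]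
  -- main computation
  calc (∫ x in Set.Ioi (0 : ℝ),
        Θ * x ^ (ξ - 1) * ∫ t in Set.Ioi (X * x ^ α), t ^ (Φ - 1) * Real.exp (-t))
      = ∫ x in Set.Ioi (0 : ℝ), ∫ t in Set.Ioi (0 : ℝ), G (x, t) :=
        setIntegral_congr_fun measurableSet_Ioi (fun x hx => hinner x hx)
    _ = ∫ t in Set.Ioi (0 : ℝ), ∫ x in Set.Ioi (0 : ℝ), G (x, t) :=
        MeasureTheory.integral_integral_swap hInt
    _ = ∫ t in Set.Ioi (0 : ℝ), Θ * X ^ (-s) / ξ * (t ^ (μ - 1) * Real.exp (-t)) :=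
        setIntegral_congr_fun measurableSet_Ioi (fun t ht => hval t ht)
    _ = Θ * X ^ (-s) / ξ * Real.Gamma μ := by
        rw [integral_const_mul]
        congr 1
        rw [Real.Gamma_eq_integral hμ]
        exact setIntegral_congr_fun measurableSet_Ioi (fun t ht => mul_comm _ _)
    _ = 1 := by
        have hXs : X ^ s = μ ^ s / (hhat ^ ξ * A₀ ^ ξ) := by
          rw [hX, Real.div_rpow hμ.le (by positivity),
            Real.mul_rpow (by positivity) (by positivity),
            ← Real.rpow_mul hhat_pos.le, ← Real.rpow_mul hA₀.le,
            show α * s = ξ by rw [hs]; field_simp]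
        rw [Real.rpow_neg hXpos.le, hXs, hΘ]
        have h1 : (0:ℝ) < μ ^ s := rpow_pos_of_pos hμ s
        have h2 : (0:ℝ) < hhat ^ ξ := rpow_pos_of_pos hhat_pos ξ
        have h3 : (0:ℝ) < A₀ ^ ξ := rpow_pos_of_pos hA₀ ξ
        field_simp
end

section
/- Let α, μ, ĥ, ξ, A₀, Δ > 0 and let f_{h_f}(u) = (α·μ^μ/(ĥ^{αμ}·Γ(μ)))·u^{αμ−1}·exp(−μ·u^α/ĥ^α) for u > 0 and f_{h_p}(v) = (ξ/A₀^ξ)·v^{ξ−1} for 0 < v ≤ A₀. Then the ergodic capacity of the product channel equals the single integral against the combined density: ∫₀^∞ ∫₀^{A₀} log₂(1 + Δ·(u·v)²)·f_{h_f}(u)·f_{h_p}(v) dv du = (Θ/ln 2)·∫₀^∞ x^{ξ−1}·ln(1 + Δ·x²)·Γ(Φ, X·x^α) dx, where Θ = ξ·μ^{ξ/α}/(A₀^ξ·ĥ^ξ·Γ(μ)), Φ = (αμ − ξ)/α, X = μ/(ĥ^α·A₀^α), and Γ(s,T) = ∫_T^∞ t^{s−1}·e^{−t} dt is the upper incomplete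 gamma function. -/
open Real MeasureTheory Set

lemma swap_aux (A B : ℝ → ℝ) (c : ℝ) (hc : 0 < c)
    (hA : Measurable A) (hB : Measurable B)
    (hA0 : ∀ u ∈ Set.Ioi (0:ℝ), 0 ≤ A u) (hB0 : ∀ x ∈ Set.Ioi (0:ℝ), 0 ≤ B x)
    (hBint : ∀ u, 0 < u → IntegrableOn B (Set.Ioc 0 (c*u)))
    (hAint : ∀ x, 0 < x → IntegrableOn A (Set.Ioi (x/c))) :
    ∫ u in Set.Ioi (0:ℝ), A u * ∫ x in Set.Ioc 0 (c*u), B x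
      = ∫ x in Set.Ioi (0:ℝ), B x * ∫ u in Set.Ioi (x/c), A u := by
  set A' : ℝ → ENNReal := fun u => ENNReal.ofReal (A u) with hA'
  set B' : ℝ → ENNReal := fun x => ENNReal.ofReal (B x) with hB'
  have hA'm : Measurable A' := ENNReal.measurable_ofReal.comp hA
  have hB'm : Measurable B' := ENNReal.measurable_ofReal.comp hB
  set H : ℝ → ℝ → ENNReal := fun u x => A' u * (Set.Iic (c*u)).indicator B' x with hH
  have hHsym : ∀ u x, H u x = B' x * (Set.Ici (x/c)).indicator A' u := by
    intro u x
    have hiff : x ≤ c*u ↔ x/c ≤ u := by rw [div_le_iff₀ hc, mul_comm]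
    by_cases h : x ≤ c*u
    · simp [hH, Set.indicator_apply, h, hiff.mp h, mul_comm]
    · have h2 : ¬ x/c ≤ u := fun hh => h (hiff.mpr hh)
      simp [hH, Set.indicator_apply, h, h2]
  have hHm : Measurable (Function.uncurry H) := by
    have : Function.uncurry H = fun p : ℝ × ℝ =>
        {q : ℝ × ℝ | q.2 ≤ c * q.1}.indicator (fun q => A' q.1 * B' q.2) p := by
      funext p
      by_cases h : p.2 ≤ c * p.1 <;>
        simp [Function.uncurry, hH, Set.indicator_apply, h]
    rw [this]
    exact ((hA'm.comp measurable_fst).mul (hB'm.comp measurable_snd)).indicator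
      (measurableSet_le measurable_snd (measurable_fst.const_mul c))
  -- key1 : inner lintegral over Ioi 0 in x equals restricted
  have key1 : ∀ u : ℝ, ∫⁻ x in Set.Ioi (0:ℝ), H u x
      = A' u * ∫⁻ x in Set.Ioc 0 (c*u), B' x := by
    intro u
    rw [lintegral_const_mul' _ _ ENNReal.ofReal_ne_top,
      lintegral_indicator measurableSet_Iic,
      Measure.restrict_restrict measurableSet_Iic, Set.inter_comm, Set.Ioi_inter_Iic]
  have key2 : ∀ x : ℝ, 0 < x → ∫⁻ u in Set.Ioi (0:ℝ), H u x
      = B' x * ∫⁻ u in Set.Ioi (x/c), A' u := by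
    intro x hx
    simp_rw [hHsym]
    rw [lintegral_const_mul' _ _ ENNReal.ofReal_ne_top,
      lintegral_indicator measurableSet_Ici,
      Measure.restrict_restrict measurableSet_Ici]
    have h1 : Set.Ici (x/c) ∩ Set.Ioi (0:ℝ) = Set.Ici (x/c) :=
      Set.inter_eq_left.mpr (fun y hy => lt_of_lt_of_le (div_pos hx hc) hy)
    rw [h1, Measure.restrict_congr_set Ioi_ae_eq_Ici.symm]
  -- LHS conversion
  have hL : ∫ u in Set.Ioi (0:ℝ), A u * ∫ x in Set.Ioc 0 (c*u), B x
      = (∫⁻ u in Set.Ioi (0:ℝ), ∫⁻ x in Set.Ioi (0:ℝ), H u x).toReal := by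
    rw [← integral_toReal]
    · apply setIntegral_congr_fun measurableSet_Ioi
      intro u hu
      have hcu : (0:ℝ) < c * u := mul_pos hc hu
      have hinner : ∫ x in Set.Ioc 0 (c*u), B x
          = (∫⁻ x in Set.Ioc 0 (c*u), B' x).toReal := by
        rw [integral_eq_lintegral_of_nonneg_ae]
        · exact (ae_restrict_iff' measurableSet_Ioc).mpr
            (Filter.Eventually.of_forall fun x hx => hB0 x hx.1)
        · exact hB.aestronglyMeasurable.restrict
      dsimp only
      rw [key1, hinner, ENNReal.toReal_mul, ENNReal.toReal_ofReal (hA0 u hu)]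
    · exact ((hHm.lintegral_prod_right).comp measurable_id).aemeasurable
    · refine (ae_restrict_iff' measurableSet_Ioi).mpr (Filter.Eventually.of_forall ?_)
      intro u hu
      rw [key1]
      exact ENNReal.mul_lt_top ENNReal.ofReal_lt_top (hBint u hu).lintegral_lt_top
  -- RHS conversion
  have hR : ∫ x in Set.Ioi (0:ℝ), B x * ∫ u in Set.Ioi (x/c), A u
      = (∫⁻ x in Set.Ioi (0:ℝ), ∫⁻ u in Set.Ioi (0:ℝ), H u x).toReal := by
    rw [← integral_toReal]
    · apply setIntegral_congr_fun measurableSet_Ioi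
      intro x hx
      have hinner : ∫ u in Set.Ioi (x/c), A u
          = (∫⁻ u in Set.Ioi (x/c), A' u).toReal := by
        rw [integral_eq_lintegral_of_nonneg_ae]
        · exact (ae_restrict_iff' measurableSet_Ioi).mpr
            (Filter.Eventually.of_forall fun u hu =>
              hA0 u (lt_trans (div_pos hx hc) hu))
        · exact hA.aestronglyMeasurable.restrict
      dsimp only
      rw [key2 x hx, hinner, ENNReal.toReal_mul, ENNReal.toReal_ofReal (hB0 x hx)]
    · have : Measurable fun x => ∫⁻ u in Set.Ioi (0:ℝ), H u x := by
        have := (Measurable.lintegral_prod_right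
          (f := fun x u => H u x) (ν := volume.restrict (Set.Ioi (0:ℝ))) ?_)
        · exact this
        · exact hHm.comp (measurable_swap)
      exact this.aemeasurable
    · refine (ae_restrict_iff' measurableSet_Ioi).mpr (Filter.Eventually.of_forall ?_)
      intro x hx
      rw [key2 x hx]
      exact ENNReal.mul_lt_top ENNReal.ofReal_lt_top (hAint x hx).lintegral_lt_top
  rw [hL, hR, lintegral_lintegral_swap (hHm.aemeasurable)]
open Real MeasureTheory Set

lemma image_rpow_Ioi {α X' a : ℝ} (hα : 0 < α) (hX' : 0 < X') (ha : 0 < a) :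
    (fun u : ℝ => X' * u ^ α) '' Set.Ioi a = Set.Ioi (X' * a ^ α) := by
  ext t
  constructor
  · rintro ⟨u, hu, rfl⟩
    exact mul_lt_mul_of_pos_left (Real.rpow_lt_rpow ha.le hu hα) hX'
  · intro ht
    have hta : a ^ α < t / X' := (lt_div_iff₀ hX').mpr (by rw [mul_comm]; exact ht)
    have htp : (0:ℝ) < t / X' := lt_trans (Real.rpow_pos_of_pos ha α) hta
    refine ⟨(t / X') ^ α⁻¹, ?_, ?_⟩
    · have := Real.rpow_lt_rpow (Real.rpow_nonneg ha.le α) hta (inv_pos.mpr hα)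
      rwa [← Real.rpow_mul ha.le, mul_inv_cancel₀ hα.ne', Real.rpow_one] at this
    · have : ((t / X') ^ α⁻¹) ^ α = t / X' := by
        rw [← Real.rpow_mul htp.le, inv_mul_cancel₀ hα.ne', Real.rpow_one]
      show X' * ((t / X') ^ α⁻¹) ^ α = t
      rw [this, mul_div_cancel₀ _ hX'.ne']

lemma deriv_smul_eq {α Φ X' : ℝ} (hα : 0 < α) (hX' : 0 < X') {u : ℝ} (hu : 0 < u) :
    |X' * (α * u ^ (α - 1))| • ((X' * u ^ α) ^ (Φ - 1) * Real.exp (-(X' * u ^ α)))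
      = (α * X' ^ Φ) * (u ^ (α * Φ - 1) * Real.exp (-(X' * u ^ α))) := by
  have h1 : |X' * (α * u ^ (α - 1))| = X' * (α * u ^ (α - 1)) :=
    abs_of_pos (mul_pos hX' (mul_pos hα (Real.rpow_pos_of_pos hu _)))
  rw [smul_eq_mul, h1, Real.mul_rpow hX'.le (Real.rpow_nonneg hu.le α),
    ← Real.rpow_mul hu.le]
  have h2 : X' * X' ^ (Φ - 1) = X' ^ Φ := by
    rw [show Φ = 1 + (Φ - 1) by ring, Real.rpow_add hX', Real.rpow_one]
    ring_nf
  have h3 : u ^ (α - 1) * u ^ (α * (Φ - 1)) = u ^ (α * Φ - 1) := by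
    rw [← Real.rpow_add hu, show α - 1 + α * (Φ - 1) = α * Φ - 1 by ring]
  rw [← h2, ← h3]; ring


lemma hasDeriv_aux {α X' a : ℝ} (hα : 0 < α) (ha : 0 < a) :
    ∀ u ∈ Set.Ioi a, HasDerivWithinAt (fun u : ℝ => X' * u ^ α)
      (X' * (α * u ^ (α - 1))) (Set.Ioi a) u := fun u hu =>
  ((Real.hasDerivAt_rpow_const (Or.inl (lt_trans ha hu).ne')).const_mul X').hasDerivWithinAt

lemma injOn_aux {α X' a : ℝ} (hα : 0 < α) (hX' : 0 < X') (ha : 0 < a) :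
    Set.InjOn (fun u : ℝ => X' * u ^ α) (Set.Ioi a) := by
  have : StrictMonoOn (fun u : ℝ => X' * u ^ α) (Set.Ioi a) := fun u hu v _ huv =>
    mul_lt_mul_of_pos_left (Real.rpow_lt_rpow (lt_trans ha hu).le huv hα) hX'
  exact this.injOn

/-- substitution t = X' u^α in the incomplete gamma integral -/
lemma half2 {α Φ X' a : ℝ} (hα : 0 < α) (hX' : 0 < X') (ha : 0 < a) :
    ∫ t in Set.Ioi (X' * a ^ α), t ^ (Φ - 1) * Real.exp (-t)
      = (α * X' ^ Φ) * ∫ u in Set.Ioi a, u ^ (α * Φ - 1) * Real.exp (-(X' * u ^ α)) := by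
  rw [← image_rpow_Ioi hα hX' ha,
    integral_image_eq_integral_abs_deriv_smul measurableSet_Ioi
      (hasDeriv_aux hα ha) (injOn_aux hα hX' ha)
      (fun t => t ^ (Φ - 1) * Real.exp (-t)),
    ← integral_const_mul]
  apply setIntegral_congr_fun measurableSet_Ioi
  intro u hu
  exact deriv_smul_eq hα hX' (lt_trans ha hu)

/-- integrability of the incomplete gamma integrand -/
lemma gamma_integrand_integrable {Φ T : ℝ} (hT : 0 < T) :
    IntegrableOn (fun t : ℝ => t ^ (Φ - 1) * Real.exp (-t)) (Set.Ioi T) := by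
  apply integrable_of_isBigO_exp_neg (one_half_pos) ?_ ?_
  · apply ContinuousOn.mul
    · exact ContinuousOn.rpow_const continuousOn_id
        (fun t ht => Or.inl (lt_of_lt_of_le hT ht).ne')
    · exact (Real.continuous_exp.comp continuous_neg).continuousOn
  · have := (Real.Gamma_integrand_isLittleO (Φ - 1)).isBigO
    refine this.congr' ?_ ?_
    · filter_upwards with t using mul_comm _ _
    · filter_upwards with t
      norm_num
lemma A_integrableOn {α Φ X' a : ℝ} (hα : 0 < α) (hX' : 0 < X') (ha : 0 < a) :
    IntegrableOn (fun u : ℝ => u ^ (α * Φ - 1) * Real.exp (-(X' * u ^ α)))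
      (Set.Ioi a) := by
  have h1 := (integrableOn_image_iff_integrableOn_abs_deriv_smul measurableSet_Ioi
    (hasDeriv_aux (X' := X') hα ha) (injOn_aux hα hX' ha)
    (fun t => t ^ (Φ - 1) * Real.exp (-t))).mp
    (by rw [image_rpow_Ioi hα hX' ha]
        exact gamma_integrand_integrable (mul_pos hX' (Real.rpow_pos_of_pos ha α)))
  have h2 : IntegrableOn (fun u : ℝ =>
      (α * X' ^ Φ) * (u ^ (α * Φ - 1) * Real.exp (-(X' * u ^ α)))) (Set.Ioi a) :=
    h1.congr_fun (fun u hu => deriv_smul_eq hα hX' (lt_trans ha hu)) measurableSet_Ioi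
  have h3 : IntegrableOn (fun u : ℝ =>
      (α * X' ^ Φ)⁻¹ * ((α * X' ^ Φ) * (u ^ (α * Φ - 1) * Real.exp (-(X' * u ^ α)))))
      (Set.Ioi a) := h2.const_mul _
  apply h3.congr_fun ?_ measurableSet_Ioi
  intro u _
  have hc : (α * X' ^ Φ) ≠ 0 := (mul_pos hα (Real.rpow_pos_of_pos hX' Φ)).ne'
  field_simp

lemma B_measurable (ξ Δ : ℝ) :
    Measurable (fun x : ℝ => x ^ (ξ - 1) * Real.log (1 + Δ * x ^ 2)) := by
  apply Measurable.mul (by fun_prop)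
  exact Real.measurable_log.comp (by fun_prop)

lemma A_measurable (c X' α : ℝ) :
    Measurable (fun u : ℝ => u ^ (c - 1) * Real.exp (-(X' * u ^ α))) := by
  fun_prop

lemma B_integrableOn {ξ Δ M : ℝ} (hξ : 0 < ξ) (hΔ : 0 ≤ Δ) (hM : 0 < M) :
    IntegrableOn (fun x : ℝ => x ^ (ξ - 1) * Real.log (1 + Δ * x ^ 2)) (Set.Ioc 0 M) := by
  have h1 : IntegrableOn (fun x : ℝ => x ^ (ξ - 1)) (Set.Ioc 0 M) :=
    (intervalIntegral.intervalIntegrable_rpow' (by linarith)).1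
  have h2 : IntegrableOn (fun x : ℝ => x ^ (ξ - 1) * Real.log (1 + Δ * M ^ 2))
      (Set.Ioc 0 M) := h1.mul_const _
  apply Integrable.mono' h2 ((B_measurable ξ Δ).aestronglyMeasurable.restrict)
  refine (ae_restrict_iff' measurableSet_Ioc).mpr (Filter.Eventually.of_forall ?_)
  intro x hx
  have hx2 : x ^ 2 ≤ M ^ 2 := by nlinarith [hx.1, hx.2]
  have hlog0 : 0 ≤ Real.log (1 + Δ * x ^ 2) :=
    Real.log_nonneg (by nlinarith [sq_nonneg x])
  rw [Real.norm_eq_abs, abs_of_nonneg (mul_nonneg (Real.rpow_nonneg hx.1.le _) hlog0)]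
  exact mul_le_mul_of_nonneg_left
    (Real.log_le_log (by nlinarith [sq_nonneg x]) (by nlinarith)) (Real.rpow_nonneg hx.1.le _)

lemma image_mul_Ioc {u A₀ : ℝ} (hu : 0 < u) (hA₀ : 0 < A₀) :
    (fun v : ℝ => u * v) '' Set.Ioc 0 A₀ = Set.Ioc 0 (A₀ * u) := by
  ext x
  constructor
  · rintro ⟨v, hv, rfl⟩
    exact ⟨mul_pos hu hv.1, by rw [mul_comm A₀ u]; exact mul_le_mul_of_nonneg_left hv.2 hu.le⟩
  · intro hx
    refine ⟨x / u, ⟨div_pos hx.1 hu, ?_⟩, by field_simp⟩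
    rw [div_le_iff₀ hu]
    rw [mul_comm A₀ u] at hx
    exact hx.2.trans (by rw [mul_comm])

lemma half1 {u A₀ : ℝ} (hu : 0 < u) (hA₀ : 0 < A₀) (B : ℝ → ℝ) :
    ∫ x in Set.Ioc 0 (A₀ * u), B x = ∫ v in Set.Ioc 0 A₀, |u| • B (u * v) := by
  rw [← image_mul_Ioc hu hA₀]
  have := integral_image_eq_integral_abs_deriv_smul (f := fun v : ℝ => u * v)
    (f' := fun _ => u) (s := Set.Ioc 0 A₀) measurableSet_Ioc
    (fun v _ => by simpa using ((hasDerivAt_id v).const_mul u).hasDerivWithinAt)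
    (fun a _ b _ h => mul_left_cancel₀ hu.ne' h) B
  simpa using this

/-- The ergodic capacity of the product channel, written as a double integral
against the α–μ and misalignment fading densities, equals the single integral
against the combined density. -/
theorem ergodic_capacity_double_integral_eq_single
    (α μ hhat ξ A₀ Δ : ℝ) (hα : 0 < α) (hμ : 0 < μ) (hhat_pos : 0 < hhat)
    (hξ : 0 < ξ) (hA₀ : 0 < A₀) (hΔ : 0 < Δ)
    (Θ Φ X : ℝ)
    (hΘ : Θ = ξ * μ ^ (ξ / α) / (A₀ ^ ξ * hhat ^ ξ * Real.Gamma μ))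
    (hΦ : Φ = (α * μ - ξ) / α)
    (hX : X = μ / (hhat ^ α * A₀ ^ α)) :
    (∫ u in Set.Ioi (0 : ℝ), ∫ v in Set.Ioc (0 : ℝ) A₀,
        Real.logb 2 (1 + Δ * (u * v) ^ 2) *
          ((α * μ ^ μ / (hhat ^ (α * μ) * Real.Gamma μ)) * u ^ (α * μ - 1) *
            Real.exp (-μ * u ^ α / hhat ^ α)) *
          ((ξ / A₀ ^ ξ) * v ^ (ξ - 1)))
      = (Θ / Real.log 2) *
          ∫ x in Set.Ioi (0 : ℝ),
            x ^ (ξ - 1) * Real.log (1 + Δ * x ^ 2) *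
              ∫ t in Set.Ioi (X * x ^ α), t ^ (Φ - 1) * Real.exp (-t) := by
  set X' : ℝ := μ / hhat ^ α with hX'
  have hX'0 : 0 < X' := div_pos hμ (Real.rpow_pos_of_pos hhat_pos α)
  have hΦα : α * Φ = α * μ - ξ := by rw [hΦ]; field_simp
  set Bf : ℝ → ℝ := fun x => x ^ (ξ - 1) * Real.log (1 + Δ * x ^ 2) with hBf
  set Af : ℝ → ℝ := fun u => u ^ (α * Φ - 1) * Real.exp (-(X' * u ^ α)) with hAf
  set Cst : ℝ := (α * μ ^ μ / (hhat ^ (α * μ) * Real.Gamma μ)) * (ξ / A₀ ^ ξ) *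
    (Real.log 2)⁻¹ with hCst
  -- Step 1 : rewrite LHS
  have step1 : (∫ u in Set.Ioi (0 : ℝ), ∫ v in Set.Ioc (0 : ℝ) A₀,
        Real.logb 2 (1 + Δ * (u * v) ^ 2) *
          ((α * μ ^ μ / (hhat ^ (α * μ) * Real.Gamma μ)) * u ^ (α * μ - 1) *
            Real.exp (-μ * u ^ α / hhat ^ α)) *
          ((ξ / A₀ ^ ξ) * v ^ (ξ - 1)))
      = Cst * ∫ u in Set.Ioi (0 : ℝ), Af u * ∫ x in Set.Ioc 0 (A₀ * u), Bf x := by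
    rw [← integral_const_mul]
    apply setIntegral_congr_fun measurableSet_Ioi
    intro u hu
    have hu0 : (0:ℝ) < u := hu
    dsimp only
    rw [half1 hu0 hA₀ Bf, ← integral_const_mul, ← integral_const_mul]
    apply setIntegral_congr_fun measurableSet_Ioc
    intro v hv
    have hv0 : (0:ℝ) < v := hv.1
    dsimp only
    have hexp : -(X' * u ^ α) = -μ * u ^ α / hhat ^ α := by rw [hX']; ring
    have hpow : (u * v) ^ (ξ - 1) = u ^ (ξ - 1) * v ^ (ξ - 1) :=
      Real.mul_rpow hu0.le hv0.le
    have hupow : u ^ (α * Φ - 1) * u * u ^ (ξ - 1) = u ^ (α * μ - 1) := by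
      rw [hΦα]
      calc u ^ (α * μ - ξ - 1) * u * u ^ (ξ - 1)
          = u ^ (α * μ - ξ - 1) * u ^ (1:ℝ) * u ^ (ξ - 1) := by rw [Real.rpow_one]
        _ = u ^ (α * μ - ξ - 1 + 1 + (ξ - 1)) := by
            rw [← Real.rpow_add hu0, ← Real.rpow_add hu0]
        _ = u ^ (α * μ - 1) := by ring_nf
    simp only [hAf, hBf, hCst, smul_eq_mul, abs_of_pos hu0, Real.logb, hexp, hpow]
    linear_combination (α * μ ^ μ / (hhat ^ (α * μ) * Real.Gamma μ)) * (ξ / A₀ ^ ξ) *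
      (Real.log 2)⁻¹ * Real.exp (-μ * u ^ α / hhat ^ α) * v ^ (ξ - 1) *
      Real.log (1 + Δ * (u * v) ^ 2) * hupow.symm
  -- Step 3 : swap
  have step3 : ∫ u in Set.Ioi (0 : ℝ), Af u * ∫ x in Set.Ioc 0 (A₀ * u), Bf x
      = ∫ x in Set.Ioi (0 : ℝ), Bf x * ∫ u in Set.Ioi (x / A₀), Af u := by
    apply swap_aux Af Bf A₀ hA₀ (A_measurable _ _ _) (B_measurable _ _)
    · intro u hu
      exact mul_nonneg (Real.rpow_nonneg (le_of_lt hu) _) (Real.exp_pos _).le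
    · intro x hx
      exact mul_nonneg (Real.rpow_nonneg (le_of_lt hx) _)
        (Real.log_nonneg (by nlinarith [sq_nonneg x]))
    · intro u hu
      exact B_integrableOn hξ hΔ.le (mul_pos hA₀ hu)
    · intro x hx
      exact A_integrableOn hα hX'0 (div_pos hx hA₀)
  -- Step 4 : rewrite RHS
  have step4 : (∫ x in Set.Ioi (0 : ℝ),
          x ^ (ξ - 1) * Real.log (1 + Δ * x ^ 2) *
            ∫ t in Set.Ioi (X * x ^ α), t ^ (Φ - 1) * Real.exp (-t))
      = (α * X' ^ Φ) *
          ∫ x in Set.Ioi (0 : ℝ), Bf x * ∫ u in Set.Ioi (x / A₀), Af u := by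
    rw [← integral_const_mul]
    apply setIntegral_congr_fun measurableSet_Ioi
    intro x hx
    have hx0 : (0:ℝ) < x := hx
    dsimp only
    have hXx : X * x ^ α = X' * (x / A₀) ^ α := by
      rw [hX, hX', Real.div_rpow hx0.le hA₀.le]; field_simp
    rw [hXx, half2 hα hX'0 (div_pos hx0 hA₀), hBf]
    ring
  rw [step1, step3, step4]
  -- Step 5 : constants
  have hconst : Cst = (Θ / Real.log 2) * (α * X' ^ Φ) := by
    have e1 : (μ / hhat ^ α) ^ Φ = μ ^ Φ / hhat ^ (α * Φ) := by
      rw [Real.div_rpow hμ.le (Real.rpow_nonneg hhat_pos.le α), ← Real.rpow_mul hhat_pos.le]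
    have e2 : μ ^ (ξ / α) * μ ^ Φ = μ ^ μ := by
      rw [← Real.rpow_add hμ]
      congr 1
      rw [hΦ]; field_simp; ring
    have e3 : hhat ^ (α * μ) = hhat ^ ξ * hhat ^ (α * Φ) := by
      rw [← Real.rpow_add hhat_pos, hΦα]; ring_nf
    have h1 : hhat ^ ξ ≠ (0:ℝ) := (Real.rpow_pos_of_pos hhat_pos ξ).ne'
    have h2 : hhat ^ (α * Φ) ≠ (0:ℝ) := (Real.rpow_pos_of_pos hhat_pos _).ne'
    have h3 : A₀ ^ ξ ≠ (0:ℝ) := (Real.rpow_pos_of_pos hA₀ ξ).ne'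
    have h4 : Real.Gamma μ ≠ 0 := (Real.Gamma_pos_of_pos hμ).ne'
    have h5 : Real.log 2 ≠ 0 := (Real.log_pos one_lt_two).ne'
    rw [hCst, hΘ, hX', e1, e3, ← e2]
    field_simp
  rw [hconst]; ring
end

section
/- Let α, μ, ĥ, ξ, A₀, Δ > 0 and set Φ = (αμ − ξ)/α and X = μ/(ĥ^α·A₀^α). Then the function x ↦ x^{ξ−1}·ln(1 + Δ·x²)·Γ(Φ, X·x^α) is (Lebesgue) integrable on (0, ∞), where Γ(s,T) = ∫_T^∞ t^{s−1}·e^{−t} dt is the upper incomplete gamma function; consequently the ergodic capacity C = (Θ/ln 2)·∫₀^∞ x^{ξ−1}·ln(1 + Δ·x²)·Γ(Φ, X·x^α) dx is finite. -/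
/-!
For `T > 0` and any `p ≤ 0` with `p < a`, on `[T, ∞)` we have
`t^(a-1) e^(-t) ≤ T^p e^(-T/2) · t^(a-p-1) e^(-t/2)`, whence
`Γ(a, T) ≤ 2^(a-p) Γ(a-p) T^p e^(-T/2)`. Take `p = -(ξ+1)/α` and `T = X x^α`: the factor
`T^p` cancels the `x^(ξ+1)` in `x^(ξ-1) log(1 + Δx²) ≤ Δ x^(ξ+1)`, so the integrand is
dominated by a multiple of `exp(-(X/2) x^α)`, which is integrable on `(0, ∞)`.
Measurability comes from the monotonicity of `Γ(a, ·)`.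
-/

open Real MeasureTheory

open Set

noncomputable def upperIncompleteGamma (a T : ℝ) : ℝ :=
  ∫ t in Ioi T, t ^ (a - 1) * exp (-t)

section UpperIncompleteGamma

variable {a p T : ℝ}

lemma integrableOn_rpow_mul_exp_neg_half_Ioi_zero {s : ℝ} (hs : 0 < s) :
    IntegrableOn (fun t : ℝ => t ^ (s - 1) * exp (-(1 / 2) * t)) (Ioi 0) := by
  simpa only [rpow_one] using
    integrableOn_rpow_mul_exp_neg_mul_rpow (p := 1) (b := 1 / 2) (by linarith) one_pos
      one_half_pos

lemma rpow_mul_exp_neg_le (hp : p ≤ 0) (hT : 0 < T) {t : ℝ} (ht : T ≤ t) :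
    t ^ (a - 1) * exp (-t) ≤
      T ^ p * exp (-(T / 2)) * (t ^ (a - p - 1) * exp (-(1 / 2) * t)) := by
  have ht0 : 0 < t := hT.trans_le ht
  have hsplit : t ^ (a - 1) = t ^ p * t ^ (a - p - 1) := by
    rw [← rpow_add ht0]; ring_nf
  have hexp : exp (-t) ≤ exp (-(T / 2)) * exp (-(1 / 2) * t) := by
    rw [← exp_add]; exact exp_le_exp.mpr (by linarith)
  calc t ^ (a - 1) * exp (-t) = t ^ p * t ^ (a - p - 1) * exp (-t) := by rw [hsplit]
    _ ≤ T ^ p * t ^ (a - p - 1) * (exp (-(T / 2)) * exp (-(1 / 2) * t)) :=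
        mul_le_mul (mul_le_mul_of_nonneg_right (rpow_le_rpow_of_nonpos hT ht hp) (by positivity))
          hexp (by positivity) (by positivity)
    _ = _ := by ring

lemma integrableOn_rpow_mul_exp_neg_Ioi (a : ℝ) (hT : 0 < T) :
    IntegrableOn (fun t : ℝ => t ^ (a - 1) * exp (-t)) (Ioi T) := by
  set p := min 0 (a - 1)
  have hdom := ((integrableOn_rpow_mul_exp_neg_half_Ioi_zero (s := a - p)
    (by simp [p])).mono_set (Ioi_subset_Ioi hT.le)).const_mul (T ^ p * exp (-(T / 2)))
  refine hdom.mono' (by fun_prop) ?_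
  filter_upwards [ae_restrict_mem measurableSet_Ioi] with t ht
  rw [norm_of_nonneg (by have : 0 < t := hT.trans ht; positivity)]
  exact rpow_mul_exp_neg_le (min_le_left _ _) hT ht.le

lemma upperIncompleteGamma_nonneg (a : ℝ) (hT : 0 ≤ T) : 0 ≤ upperIncompleteGamma a T :=
  setIntegral_nonneg measurableSet_Ioi fun t ht => by
    have : 0 < t := hT.trans_lt ht; positivity

lemma upperIncompleteGamma_antitoneOn (a : ℝ) : AntitoneOn (upperIncompleteGamma a) (Ioi 0) :=
  fun T hT _ _ hTT' =>
    setIntegral_mono_set (integrableOn_rpow_mul_exp_neg_Ioi a hT)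
      (by filter_upwards [ae_restrict_mem measurableSet_Ioi] with t ht
          have : 0 < t := lt_trans hT ht; positivity)
      (Ioi_subset_Ioi hTT').eventuallyLE

lemma upperIncompleteGamma_le (hp : p ≤ 0) (hpa : p < a) (hT : 0 < T) :
    upperIncompleteGamma a T ≤ 2 ^ (a - p) * Gamma (a - p) * T ^ p * exp (-(T / 2)) := by
  have hint := integrableOn_rpow_mul_exp_neg_half_Ioi_zero (sub_pos.mpr hpa)
  have hsub : Ioi T ⊆ Ioi 0 := Ioi_subset_Ioi hT.le
  have hGamma :
      ∫ t in Ioi 0, t ^ (a - p - 1) * exp (-(1 / 2) * t) = 2 ^ (a - p) * Gamma (a - p) := by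
    simp_rw [neg_mul, integral_rpow_mul_exp_neg_mul_Ioi (sub_pos.mpr hpa) one_half_pos]
    norm_num
  calc upperIncompleteGamma a T
      ≤ ∫ t in Ioi T, T ^ p * exp (-(T / 2)) * (t ^ (a - p - 1) * exp (-(1 / 2) * t)) :=
        setIntegral_mono_on (integrableOn_rpow_mul_exp_neg_Ioi a hT)
          ((hint.mono_set hsub).const_mul _) measurableSet_Ioi
          fun t ht => rpow_mul_exp_neg_le hp hT (le_of_lt ht)
    _ = T ^ p * exp (-(T / 2)) * ∫ t in Ioi T, t ^ (a - p - 1) * exp (-(1 / 2) * t) :=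
        integral_const_mul _ _
    _ ≤ T ^ p * exp (-(T / 2)) * (2 ^ (a - p) * Gamma (a - p)) := by
        rw [← hGamma]
        refine mul_le_mul_of_nonneg_left (setIntegral_mono_set hint ?_ hsub.eventuallyLE)
          (by positivity)
        filter_upwards [ae_restrict_mem measurableSet_Ioi] with t (ht : 0 < t)
        positivity
    _ = _ := by ring

end UpperIncompleteGamma

lemma integrableOn_exp_neg_mul_rpow {α b : ℝ} (hα : 0 < α) (hb : 0 < b) :
    IntegrableOn (fun x : ℝ => exp (-b * x ^ α)) (Ioi 0) := by
  simpa only [rpow_zero, one_mul] using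
    integrableOn_rpow_mul_exp_neg_mul_rpow (s := 0) (by norm_num) hα hb

lemma norm_rpow_mul_log_mul_upperIncompleteGamma_le {α ξ Δ X a p x : ℝ}
    (hΔ : 0 ≤ Δ) (hX : 0 < X) (hp : p ≤ 0) (hpa : p < a) (hαp : α * p = -(ξ + 1))
    (hx : 0 < x) :
    ‖x ^ (ξ - 1) * log (1 + Δ * x ^ 2) * upperIncompleteGamma a (X * x ^ α)‖ ≤
      Δ * (2 ^ (a - p) * Gamma (a - p)) * X ^ p * exp (-(X / 2) * x ^ α) := by
  have hT : 0 < X * x ^ α := by positivity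
  have hlog_nonneg : 0 ≤ log (1 + Δ * x ^ 2) := log_nonneg (by nlinarith)
  have hlog_le : log (1 + Δ * x ^ 2) ≤ Δ * x ^ 2 := by
    linarith [log_le_sub_one_of_pos (show 0 < 1 + Δ * x ^ 2 by positivity)]
  have hpow : x ^ (ξ - 1) * x ^ 2 * (X * x ^ α) ^ p = X ^ p := by
    rw [mul_rpow hX.le (by positivity), ← rpow_mul hx.le, hαp, ← rpow_two, ← rpow_add hx,
      mul_left_comm, ← rpow_add hx]
    ring_nf
    rw [rpow_zero, mul_one]
  rw [norm_of_nonneg <| mul_nonneg (mul_nonneg (by positivity) hlog_nonneg)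
    (upperIncompleteGamma_nonneg a hT.le)]
  calc x ^ (ξ - 1) * log (1 + Δ * x ^ 2) * upperIncompleteGamma a (X * x ^ α)
      ≤ x ^ (ξ - 1) * (Δ * x ^ 2) *
          (2 ^ (a - p) * Gamma (a - p) * (X * x ^ α) ^ p * exp (-(X * x ^ α / 2))) :=
        mul_le_mul (mul_le_mul_of_nonneg_left hlog_le (by positivity))
          (upperIncompleteGamma_le hp hpa hT) (upperIncompleteGamma_nonneg a hT.le)
          (by positivity)
    _ = _ := by
        rw [show -(X * x ^ α / 2) = -(X / 2) * x ^ α by ring]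
        linear_combination (Δ * (2 ^ (a - p) * Gamma (a - p)) * exp (-(X / 2) * x ^ α)) * hpow

/-- The integrand of the ergodic-capacity integral,
`x ↦ x^{ξ-1}·ln(1+Δx²)·Γ(Φ, X x^α)`, is Lebesgue integrable on `(0,∞)`;
hence the ergodic capacity is finite. -/
theorem ergodic_capacity_integrand_integrable
    (α μ hhat ξ A₀ Δ : ℝ) (hα : 0 < α) (hμ : 0 < μ) (hhat_pos : 0 < hhat)
    (hξ : 0 < ξ) (hA₀ : 0 < A₀) (hΔ : 0 < Δ)
    (Φ X : ℝ)
    (hΦ : Φ = (α * μ - ξ) / α)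
    (hX : X = μ / (hhat ^ α * A₀ ^ α)) :
    MeasureTheory.IntegrableOn
      (fun x : ℝ =>
        x ^ (ξ - 1) * Real.log (1 + Δ * x ^ 2) *
          ∫ t in Set.Ioi (X * x ^ α), t ^ (Φ - 1) * Real.exp (-t))
      (Set.Ioi (0 : ℝ)) := by
  change IntegrableOn (fun x => x ^ (ξ - 1) * log (1 + Δ * x ^ 2) *
    upperIncompleteGamma Φ (X * x ^ α)) (Ioi 0)
  have hX0 : 0 < X := by rw [hX]; positivity
  set p := -(ξ + 1) / α
  have hp : p ≤ 0 := div_nonpos_of_nonpos_of_nonneg (by linarith) hα.le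
  have hpΦ : p < Φ := by
    rw [hΦ, div_lt_div_iff_of_pos_right hα]; nlinarith
  have hαp : α * p = -(ξ + 1) := mul_div_cancel₀ _ hα.ne'
  have hanti : AntitoneOn (fun x => upperIncompleteGamma Φ (X * x ^ α)) (Ioi 0) :=
    (upperIncompleteGamma_antitoneOn Φ).comp_MonotoneOn
      (fun x hx y _ hxy => by gcongr; exact le_of_lt hx)
      fun x (hx : 0 < x) => by simp only [mem_Ioi]; positivity
  refine ((integrableOn_exp_neg_mul_rpow hα (half_pos hX0)).const_mul
    (Δ * (2 ^ (Φ - p) * Gamma (Φ - p)) * X ^ p)).mono' ?_ ?_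
  · have hmeas : Measurable fun x : ℝ => x ^ (ξ - 1) * log (1 + Δ * x ^ 2) := by fun_prop
    exact hmeas.aestronglyMeasurable.mul
      (aemeasurable_restrict_of_antitoneOn measurableSet_Ioi hanti).aestronglyMeasurable
  · filter_upwards [ae_restrict_mem measurableSet_Ioi] with x (hx : 0 < x)
    simpa only [mul_assoc] using
      norm_rpow_mul_log_mul_upperIncompleteGamma_le hΔ.le hX0 hp hpΦ hαp hx
end
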